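/- Let 𝒜 = (Q, δ, ε) be a geometrically minimal DFA over Σ with language ℒ and path language tree T. Then a portrait σ = (ᵛσ)_{v∈ℒ} defines an automorphism of T if and only if it is admissible, i.e. for every v ∈ ℒ the injection ᵛσ is a permutation of Σ(q(v)) satisfying δ(q(v), ᵛσ(α)) = δ(q(v), α) for all α ∈ Σ(v). -/

import Mathlib

/-- A rooted directed multigraph. -/
structure RGraph where
  V : Type
  E : Type
  s : E → V
  t : E → V
  root : V

namespace RGraph

/-- `l` is a path: consecutive edges are composable. -/
def IsPath (A : RGraph) (l : List A.E) : Prop :=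
  l.Chain' (fun e f => A.t e = A.s f)

/-- `l` is a path starting at the vertex `q`. -/
def PathFrom (A : RGraph) (q : A.V) (l : List A.E) : Prop :=
  A.IsPath l ∧ ∀ e ∈ l.head?, A.s e = q

/-- The target of the path `l` started at `q` (equal to `q` for the empty path). -/
def pathTarget (A : RGraph) (q : A.V) (l : List A.E) : A.V :=
  l.foldl (fun _ e => A.t e) q

@[simp] lemma pathTarget_nil (A : RGraph) (q : A.V) : A.pathTarget q [] = q := rfl

@[simp] lemma pathTarget_cons (A : RGraph) (q : A.V) (a : A.E) (l : List A.E) :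
    A.pathTarget q (a :: l) = A.pathTarget (A.t a) l := rfl

lemma pathTarget_append (A : RGraph) (q : A.V) (l l' : List A.E) :
    A.pathTarget q (l ++ l') = A.pathTarget (A.pathTarget q l) l' := by
  simp [pathTarget]

@[simp] lemma pathTarget_append_single (A : RGraph) (q : A.V) (l : List A.E) (e : A.E) :
    A.pathTarget q (l ++ [e]) = A.t e := by
  rw [pathTarget_append]; rfl

lemma pathFrom_nil (A : RGraph) (q : A.V) : A.PathFrom q [] :=
  ⟨List.isChain_nil, by simp⟩

lemma pathTarget_getLast {A : RGraph} {q : A.V} {l : List A.E} {x : A.E}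
    (hx : x ∈ l.getLast?) : A.pathTarget q l = A.t x := by
  induction l generalizing q with
  | nil => simp at hx
  | cons a l ih =>
    cases l with
    | nil => simp at hx; subst hx; rfl
    | cons b l =>
      rw [List.getLast?_cons_cons] at hx
      simpa using ih (q := A.t a) hx

lemma pathFrom_append_single {A : RGraph} {q : A.V} {l : List A.E} {e : A.E}
    (h : A.PathFrom q l) (he : A.s e = A.pathTarget q l) :
    A.PathFrom q (l ++ [e]) := by
  constructor
  · show List.IsChain _ _
    apply List.isChain_append.mpr
    refine ⟨h.1, List.isChain_singleton _, ?_⟩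
    intro x hx y hy
    simp at hy
    subst hy
    rw [he]
    exact (pathTarget_getLast hx).symm
  · intro f hf
    cases l with
    | nil =>
      simp at hf
      subst hf
      simpa using he
    | cons a l =>
      simp at hf
      subst hf
      exact h.2 a (by simp)

/-- `w` is reachable from `q` by an oriented path. -/
def Reach (A : RGraph) (q w : A.V) : Prop :=
  ∃ l, A.PathFrom q l ∧ A.pathTarget q l = w

lemma reach_self (A : RGraph) (q : A.V) : A.Reach q q :=
  ⟨[], A.pathFrom_nil q, rfl⟩

lemma reach_target {A : RGraph} {q : A.V} {e : A.E} (h : A.Reach q (A.s e)) :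
    A.Reach q (A.t e) := by
  obtain ⟨l, hl, ht⟩ := h
  exact ⟨l ++ [e], pathFrom_append_single hl ht.symm, by simp⟩

/-- A graph is connected (as a rooted directed graph) if every vertex is reachable
from the root. -/
def Connected (A : RGraph) : Prop := ∀ w : A.V, A.Reach A.root w

/-- A graph is a tree if the target map from paths emanating from the root to
vertices is a bijection. -/
def IsTree (A : RGraph) : Prop :=
  Function.Bijective
    (fun l : {l : List A.E // A.PathFrom A.root l} => A.pathTarget A.root l.1)

/-- A graph is locally finite if every vertex has finitely many outgoing edges. -/
def LocallyFinite (A : RGraph) : Prop := ∀ q : A.V, Finite {e : A.E // A.s e = q}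

/-- Adjacency: there is an edge from `v` to `w`. -/
def Adj (A : RGraph) (v w : A.V) : Prop := ∃ e, A.s e = v ∧ A.t e = w

/-- The induced rooted subgraph on all vertices reachable from `q` (the "cone" at `q`). -/
def subgraph (A : RGraph) (q : A.V) : RGraph where
  V := {w // A.Reach q w}
  E := {e // A.Reach q (A.s e)}
  s := fun e => ⟨A.s e.1, e.2⟩
  t := fun e => ⟨A.t e.1, reach_target e.2⟩
  root := ⟨q, A.reach_self q⟩

/-- The truncation of the cone at `v` to vertices at distance at most `d` from `v`. -/
def trunc (A : RGraph) (v : A.V) (d : ℕ) : RGraph where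
  V := {w // ∃ l, A.PathFrom v l ∧ A.pathTarget v l = w ∧ l.length ≤ d}
  E := {e // ∃ l, A.PathFrom v l ∧ A.pathTarget v l = A.s e ∧ l.length < d}
  s := fun e => ⟨A.s e.1, e.2.imp fun _ h => ⟨h.1, h.2.1, h.2.2.le⟩⟩
  t := fun e => ⟨A.t e.1, by
    obtain ⟨l, h1, h2, h3⟩ := e.2
    exact ⟨l ++ [e.1], pathFrom_append_single h1 h2.symm, by simp,
      by simp only [List.length_append, List.length_singleton]; omega⟩⟩
  root := ⟨v, [], A.pathFrom_nil v, rfl, Nat.zero_le d⟩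

/-- The universal covering tree of `A`: vertices are the paths emanating from the root. -/
def cover (A : RGraph) : RGraph where
  V := {l : List A.E // A.PathFrom A.root l}
  E := {x : {l : List A.E // A.PathFrom A.root l} × A.E //
          A.s x.2 = A.pathTarget A.root x.1.1}
  s := fun x => x.1.1
  t := fun x => ⟨x.1.1.1 ++ [x.1.2], pathFrom_append_single x.1.1.2 x.2⟩
  root := ⟨[], A.pathFrom_nil _⟩

end RGraph

/-- A morphism of rooted directed multigraphs. -/
structure GraphHom (A B : RGraph) where
  v : A.V → B.V
  e : A.E → B.E
  root_eq : v A.root = B.root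
  s_eq : ∀ x, B.s (e x) = v (A.s x)
  t_eq : ∀ x, B.t (e x) = v (A.t x)

namespace GraphHom

variable {A B : RGraph}

/-- The unique path lifting property. -/
def UPLP (p : GraphHom A B) : Prop :=
  ∀ (q : A.V) (l' : List B.E), B.PathFrom (p.v q) l' →
    ∃! l : List A.E, A.PathFrom q l ∧ l.map p.e = l'

/-- A covering morphism: surjective on vertices, with the unique path lifting property. -/
def IsCovering (p : GraphHom A B) : Prop := Function.Surjective p.v ∧ p.UPLP

/-- An isomorphism of graphs: bijective on vertices and on edges. -/
def IsIso (p : GraphHom A B) : Prop := Function.Bijective p.v ∧ Function.Bijective p.e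

/-- The restriction of the edge map to the edges emanating from `q`. -/
def outMap (p : GraphHom A B) (q : A.V) :
    {e : A.E // A.s e = q} → {e' : B.E // B.s e' = p.v q} :=
  fun e => ⟨p.e e.1, by rw [p.s_eq, e.2]⟩

lemma isPath_map (p : GraphHom A B) {l : List A.E} (h : A.IsPath l) :
    B.IsPath (l.map p.e) := by
  show List.IsChain _ _
  rw [List.isChain_map]
  exact List.IsChain.imp (fun a b hab => by rw [p.t_eq, p.s_eq, hab]) h

lemma pathFrom_map (p : GraphHom A B) {q : A.V} {l : List A.E} (h : A.PathFrom q l) :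
    B.PathFrom (p.v q) (l.map p.e) := by
  refine ⟨p.isPath_map h.1, ?_⟩
  intro f hf
  cases l with
  | nil => simp at hf
  | cons a l =>
    simp at hf
    subst hf
    rw [p.s_eq, h.2 a (by simp)]

lemma pathTarget_map (p : GraphHom A B) (q : A.V) (l : List A.E) :
    B.pathTarget (p.v q) (l.map p.e) = p.v (A.pathTarget q l) := by
  induction l generalizing q with
  | nil => rfl
  | cons a l ih =>
    show B.pathTarget (B.t (p.e a)) (l.map p.e) = _
    rw [p.t_eq]
    exact ih (A.t a)

lemma reach_map (p : GraphHom A B) {q w : A.V} (h : A.Reach q w) :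
    B.Reach (p.v q) (p.v w) := by
  obtain ⟨l, hl, ht⟩ := h
  exact ⟨l.map p.e, p.pathFrom_map hl, by rw [p.pathTarget_map, ht]⟩

end GraphHom

/-- Two graphs are isomorphic. -/
def RGraph.Iso (A B : RGraph) : Prop := ∃ p : GraphHom A B, p.IsIso

/-- The universal covering morphism from the universal covering tree of `A` to `A`. -/
def RGraph.uCover (A : RGraph) : GraphHom A.cover A where
  v := fun l => A.pathTarget A.root l.1
  e := fun x => x.1.2
  root_eq := rfl
  s_eq := fun x => x.2
  t_eq := fun x => by
    show A.t x.1.2 = A.pathTarget A.root (x.1.1.1 ++ [x.1.2])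
    simp

/-- The morphism induced between universal covering trees by a morphism of graphs. -/
def GraphHom.coverMap {A B : RGraph} (p : GraphHom A B) : GraphHom A.cover B.cover where
  v := fun l => ⟨l.1.map p.e, by have := p.pathFrom_map l.2; rwa [p.root_eq] at this⟩
  e := fun x =>
    ⟨(⟨x.1.1.1.map p.e, by have := p.pathFrom_map x.1.1.2; rwa [p.root_eq] at this⟩,
      p.e x.1.2), by
        show B.s (p.e x.1.2) = B.pathTarget B.root (x.1.1.1.map p.e)
        rw [p.s_eq, x.2, ← p.root_eq, p.pathTarget_map]⟩
  root_eq := Subtype.ext rfl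
  s_eq := fun _ => rfl
  t_eq := fun x => by
    apply Subtype.ext
    simp [RGraph.cover]

/-- `A` is a covering quotient of `T`. -/
def IsCovQuotient (T A : RGraph) : Prop := ∃ p : GraphHom T A, p.IsCovering

/-- `A` is a minimal covering quotient of `T`: a covering quotient with the minimal
number of vertices among all covering quotients of `T`. -/
def IsMinCovQuotient (T A : RGraph) : Prop :=
  IsCovQuotient T A ∧
    ∀ B : RGraph, IsCovQuotient T B → Cardinal.mk A.V ≤ Cardinal.mk B.V

/-- `T` has finitely many cone types. -/
def FinManyCones (T : RGraph) : Prop :=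
  ∃ S : Set T.V, S.Finite ∧ ∀ v : T.V, ∃ w ∈ S, RGraph.Iso (T.subgraph v) (T.subgraph w)

/-- A self-similar tree: a locally finite tree with finitely many cone types. -/
def SelfSimilarTree (T : RGraph) : Prop := T.IsTree ∧ T.LocallyFinite ∧ FinManyCones T

namespace RGraph

/-- The automorphism group of a graph, realized as the group of root-preserving,
adjacency-preserving permutations of the vertex set (for trees this is the same as the
automorphism group in the sense of graph morphisms, since in a tree an edge is determined
by its endpoints). -/
def autGroup (T : RGraph) : Subgroup (Equiv.Perm T.V) where
  carrier := {g | g T.root = T.root ∧ ∀ v w, T.Adj v w ↔ T.Adj (g v) (g w)}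
  one_mem' := ⟨rfl, fun _ _ => Iff.rfl⟩
  mul_mem' := by
    rintro a b ⟨ha1, ha2⟩ ⟨hb1, hb2⟩
    refine ⟨?_, fun v w => ?_⟩
    · show a (b T.root) = T.root
      rw [hb1, ha1]
    · exact (hb2 v w).trans (ha2 (b v) (b w))
  inv_mem' := by
    rintro a ⟨ha1, ha2⟩
    refine ⟨?_, fun v w => ?_⟩
    · show a.symm T.root = T.root
      rw [Equiv.symm_apply_eq]
      exact ha1.symm
    · have h := ha2 (a⁻¹ v) (a⁻¹ w)
      simpa using h.symm

/-- The subgroup of permutations of the vertices fixing every vertex outside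
of the cone at `v`. -/
def fixOutside (T : RGraph) (v : T.V) : Subgroup (Equiv.Perm T.V) where
  carrier := {g | ∀ w, ¬ T.Reach v w → g w = w}
  one_mem' := fun _ _ => rfl
  mul_mem' := by
    intro a b ha hb w hw
    show a (b w) = w
    rw [hb w hw, ha w hw]
  inv_mem' := by
    intro a ha w hw
    show a.symm w = w
    rw [Equiv.symm_apply_eq]
    exact (ha w hw).symm

/-- The rigid stabilizer of the vertex `v`: automorphisms fixing every vertex
outside the subtree spanned by `v` and its descendants. -/
def rist (T : RGraph) (v : T.V) : Subgroup (Equiv.Perm T.V) :=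
  T.autGroup ⊓ T.fixOutside v

/-- The set of vertices at distance `n` from the root. -/
def level (T : RGraph) (n : ℕ) : Set T.V :=
  {v | ∃ l : List T.E, T.PathFrom T.root l ∧ T.pathTarget T.root l = v ∧ l.length = n}

/-- The `n`-th rigid level stabilizer: the subgroup generated by the rigid stabilizers
of the vertices at distance `n` from the root. -/
def ristLevel (T : RGraph) (n : ℕ) : Subgroup (Equiv.Perm T.V) :=
  ⨆ v ∈ T.level n, T.rist v

/-- The `n`-th rigid level stabilizer, as a subgroup of the automorphism group. -/
def ristIn (T : RGraph) (n : ℕ) : Subgroup ↥T.autGroup :=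
  (T.ristLevel n).comap T.autGroup.subtype

end RGraph

/-- A recurrent double edge: a pair of distinct parallel edges such that there is an
oriented loop which contains one of them, or from which their common source can be
reached. -/
def HasRecDoubleEdge (A : RGraph) : Prop :=
  ∃ e₁ e₂ : A.E, e₁ ≠ e₂ ∧ A.s e₁ = A.s e₂ ∧ A.t e₁ = A.t e₂ ∧
    ((∃ (q : A.V) (l : List A.E),
        A.PathFrom q l ∧ l ≠ [] ∧ A.pathTarget q l = q ∧ (e₁ ∈ l ∨ e₂ ∈ l)) ∨
     (∃ (q : A.V) (l : List A.E),
        A.PathFrom q l ∧ l ≠ [] ∧ A.pathTarget q l = q ∧ A.Reach q (A.s e₁)))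

/-- A deterministic finite automaton over the alphabet `A`, with a partial transition
function, a single initial state, and all states accepting. -/
structure PDFA (A : Type) where
  Q : Type
  finQ : Finite Q
  neQ : Nonempty Q
  δ : Q → A → Option Q
  init : Q

namespace PDFA

variable {A : Type} (M : PDFA A)

/-- Running the automaton from state `q` on a word; `none` if it gets stuck. -/
def run : M.Q → List A → Option M.Q
  | q, [] => some q
  | q, a :: w => (M.δ q a).bind fun q' => run q' w

/-- The regular language accepted by `M`. -/
def Lang : Set (List A) := {w | (M.run M.init w).isSome}

lemma run_append (q : M.Q) (u w : List A) :
    M.run q (u ++ w) = (M.run q u).bind fun q' => M.run q' w := by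
  induction u generalizing q with
  | nil => simp [run]
  | cons a u ih =>
    simp only [List.cons_append, run]
    cases M.δ q a with
    | none => simp
    | some q' => simp [ih]

lemma isSome_of_append {q : M.Q} {u w : List A}
    (h : (M.run q (u ++ w)).isSome) : (M.run q u).isSome := by
  rw [run_append] at h
  cases hu : M.run q u with
  | none => rw [hu] at h; simp at h
  | some q' => simp

/-- The path language tree of `M`: the tree whose vertices are the words of the
language of `M`, with an edge from `w` to `w ++ [a]` whenever both belong to the
language. -/
def pathTree : RGraph where
  V := {w : List A // (M.run M.init w).isSome}
  E := {x : List A × A // (M.run M.init (x.1 ++ [x.2])).isSome}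
  s := fun x => ⟨x.1.1, M.isSome_of_append x.2⟩
  t := fun x => ⟨x.1.1 ++ [x.1.2], x.2⟩
  root := ⟨[], by simp [run]⟩

/-- The underlying rooted directed multigraph of the automaton `M`. -/
def underlying : RGraph where
  V := M.Q
  E := {x : M.Q × A // (M.δ x.1 x.2).isSome}
  s := fun x => x.1.1
  t := fun x => (M.δ x.1.1 x.1.2).get x.2
  root := M.init

/-- `M` is geometrically minimal: it has the minimal number of states among all DFAs
(over arbitrary finite nonempty alphabets) whose path language trees are isomorphic,
as unlabelled rooted trees, to the path language tree of `M`. -/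
def GeomMinimal : Prop :=
  ∀ (B : Type), Finite B → Nonempty B → ∀ N : PDFA B,
    RGraph.Iso M.pathTree N.pathTree → Nat.card M.Q ≤ Nat.card N.Q

/-- The state reached after reading the word `w` of the language. -/
def qstate (w : List A) (h : (M.run M.init w).isSome) : M.Q :=
  (M.run M.init w).get h

/-- The group of admissible permutations at the state `q`: permutations `τ` of the
alphabet fixing the letters outside `Σ(q)` and satisfying `δ(q, τ a) = δ(q, a)`. -/
def SymQ (q : M.Q) : Subgroup (Equiv.Perm A) where
  carrier := {τ | ∀ a, M.δ q (τ a) = M.δ q a ∧ (M.δ q a = none → τ a = a)}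
  one_mem' := fun _ => ⟨rfl, fun _ => rfl⟩
  mul_mem' := by
    intro τ₁ τ₂ h1 h2 a
    constructor
    · show M.δ q (τ₁ (τ₂ a)) = M.δ q a
      rw [(h1 (τ₂ a)).1, (h2 a).1]
    · intro hn
      show τ₁ (τ₂ a) = a
      rw [(h2 a).2 hn, (h1 a).2 hn]
  inv_mem' := by
    intro τ h a
    have h1 := (h (τ.symm a)).1
    rw [Equiv.apply_symm_apply] at h1
    constructor
    · show M.δ q (τ.symm a) = M.δ q a
      exact h1.symm
    · intro hn
      have h2 := (h (τ.symm a)).2 (h1.symm.trans hn)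
      rw [Equiv.apply_symm_apply] at h2
      show τ.symm a = a
      exact h2.symm

end PDFA

/-- Extending a portrait to a map on words (the first argument is the accumulated
prefix): the `i`-th letter of the image word is the image of the `i`-th letter under
the local injection at the prefix of length `i - 1`. -/
def portraitExtend {A : Type} (σ : List A → A → A) : List A → List A → List A
  | _, [] => []
  | pre, a :: w => σ pre a :: portraitExtend σ (pre ++ [a]) w

/-! In a geometrically minimal automaton every automorphism `g` of the path language tree
fixes states: `q(v)` and `q(g v)` are bisimilar up to relabelling (the portrait of `g` at `v`
matches their transitions), and two distinct bisimilar states cannot exist, because deleting one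
of them and redirecting its incoming transitions to the other gives a smaller automaton whose
path language tree is isomorphic to the original one. Given this, the portrait of `g` is
admissible. Conversely, extending an admissible portrait letter by letter leads every word to a
word with the same state, and the resulting map on words is an automorphism of the tree. -/

namespace Option.Rel

variable {α β γ : Type*} {r : α → β → Prop} {s : β → γ → Prop} {a : Option α} {b : Option β}
  {c : Option γ}

theorem isSome_eq (h : Option.Rel r a b) : a.isSome = b.isSome := by
  cases h <;> rfl

theorem swap (h : Option.Rel r a b) : Option.Rel (flip r) b a := by
  cases h with
  | some h => exact .some h
  | none => exact .none

theorem comp (h₁ : Option.Rel r a b) (h₂ : Option.Rel s b c) :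
    Option.Rel (Relation.Comp r s) a c := by
  cases h₁ with
  | some h₁ => cases h₂ with | some h₂ => exact .some ⟨_, h₁, h₂⟩
  | none => cases h₂; exact .none

end Option.Rel

namespace RGraph

theorem iso_of_equiv {G H : RGraph} (hG : Function.Injective fun e => (G.s e, G.t e))
    (hH : Function.Injective fun e => (H.s e, H.t e)) (f : G.V ≃ H.V)
    (hroot : f G.root = H.root) (hadj : ∀ v w, G.Adj v w ↔ H.Adj (f v) (f w)) : G.Iso H := by
  have hedge (e : G.E) : ∃ e' : H.E, H.s e' = f (G.s e) ∧ H.t e' = f (G.t e) :=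
    (hadj _ _).mp ⟨e, rfl, rfl⟩
  choose fe hfe using hedge
  refine ⟨⟨f, fe, hroot, fun e => (hfe e).1, fun e => (hfe e).2⟩, f.bijective, ?_, ?_⟩
  · intro e₁ e₂ (h : fe e₁ = fe e₂)
    have h₁ := hfe e₁
    rw [h, (hfe e₂).1, (hfe e₂).2] at h₁
    exact hG (Prod.ext (f.injective h₁.1.symm) (f.injective h₁.2.symm))
  · intro e'
    obtain ⟨e, hs, ht⟩ : G.Adj (f.symm (H.s e')) (f.symm (H.t e')) :=
      (hadj _ _).mpr (by rw [f.apply_symm_apply, f.apply_symm_apply]; exact ⟨e', rfl, rfl⟩)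
    exact ⟨e, hH (Prod.ext (by simp [hfe, hs]) (by simp [hfe, ht]))⟩

end RGraph

namespace PDFA

variable {A : Type} {M N : PDFA A}

def enabled (M : PDFA A) (q : M.Q) : Set A := {a | (M.δ q a).isSome}

def childLetters (M : PDFA A) (w : List A) : Set A := {a | w ++ [a] ∈ M.Lang}

theorem nil_mem_lang : [] ∈ M.Lang := rfl

theorem run_append_singleton (q : M.Q) (w : List A) (a : A) :
    M.run q (w ++ [a]) = (M.run q w).bind (M.δ · a) := by
  rw [run_append]
  congr 1
  funext q'
  simp [run]

theorem run_init_append_singleton {w : List A} {p : M.Q} (hw : M.run M.init w = some p)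
    (a : A) : M.run M.init (w ++ [a]) = M.δ p a := by
  rw [run_append_singleton, hw, Option.bind_some]

theorem run_eq_some_qstate {w : List A} (hw : (M.run M.init w).isSome) :
    M.run M.init w = some (M.qstate w hw) :=
  (Option.some_get hw).symm

theorem childLetters_eq_enabled {w : List A} {p : M.Q} (hw : M.run M.init w = some p) :
    M.childLetters w = M.enabled p := by
  ext a
  change (M.run M.init (w ++ [a])).isSome ↔ (M.δ p a).isSome
  rw [run_init_append_singleton hw]

theorem pathTree_adj_iff {v w : M.pathTree.V} : M.pathTree.Adj v w ↔ ∃ a, w.1 = v.1 ++ [a] := by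
  constructor
  · rintro ⟨e, rfl, rfl⟩
    exact ⟨e.1.2, rfl⟩
  · rintro ⟨a, ha⟩
    exact ⟨⟨(v.1, a), ha ▸ w.2⟩, rfl, Subtype.ext ha.symm⟩

theorem pathTree_edge_injective :
    Function.Injective fun e : M.pathTree.E => (M.pathTree.s e, M.pathTree.t e) := by
  rintro ⟨⟨w, a⟩, _⟩ ⟨⟨w', a'⟩, _⟩ h
  simp only [pathTree, Prod.mk.injEq, Subtype.mk.injEq] at h
  obtain ⟨rfl, h⟩ := h
  obtain rfl : a = a' := by simpa using h
  rfl

section Portrait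

variable (σ : List A → A → A)

theorem portraitExtend_append_singleton (pre w : List A) (a : A) :
    portraitExtend σ pre (w ++ [a]) = portraitExtend σ pre w ++ [σ (pre ++ w) a] := by
  induction w generalizing pre with
  | nil => simp [portraitExtend]
  | cons b w ih => simp [portraitExtend, ih]

theorem length_portraitExtend (pre w : List A) : (portraitExtend σ pre w).length = w.length := by
  induction w generalizing pre with
  | nil => rfl
  | cons b w ih => simp [portraitExtend, ih]

def IsIsoPortrait (M N : PDFA A) (σ : List A → A → A) : Prop :=
  ∀ w ∈ M.Lang, Set.BijOn (σ w) (M.childLetters w) (N.childLetters (portraitExtend σ [] w))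

variable {σ} (hσ : IsIsoPortrait M N σ)
include hσ

theorem IsIsoPortrait.bijOn : Set.BijOn (portraitExtend σ []) M.Lang N.Lang := by
  refine ⟨fun w hw => ?_, fun w hw w' hw' h => ?_, fun w' hw' => ?_⟩
  · induction w using List.reverseRecOn with
    | nil => exact nil_mem_lang
    | append_singleton w a _ =>
      rw [portraitExtend_append_singleton, List.nil_append]
      exact (hσ w (M.isSome_of_append hw)).mapsTo hw
  · induction w using List.reverseRecOn generalizing w' with
    | nil =>
      have := congrArg List.length h
      simp only [length_portraitExtend, List.length_nil] at this
      exact (List.length_eq_zero_iff.mp this.symm).symm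
    | append_singleton w a ih =>
      obtain rfl | ⟨u, b, rfl⟩ := List.eq_nil_or_concat' w'
      · simpa [length_portraitExtend] using congrArg List.length h
      simp only [portraitExtend_append_singleton, List.nil_append] at h
      obtain ⟨h, hab⟩ := List.append_inj' h rfl
      obtain rfl := ih (M.isSome_of_append hw) u (M.isSome_of_append hw') h
      rw [(hσ w (M.isSome_of_append hw)).injOn hw hw' (List.singleton_inj.mp hab)]
  · induction w' using List.reverseRecOn with
    | nil => exact ⟨[], nil_mem_lang, rfl⟩
    | append_singleton u b ih =>
      obtain ⟨w, hw, rfl⟩ := ih (N.isSome_of_append hw')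
      obtain ⟨a, ha, rfl⟩ := (hσ w hw).surjOn hw'
      exact ⟨w ++ [a], ha, by rw [portraitExtend_append_singleton, List.nil_append]⟩

noncomputable def portraitEquiv : M.pathTree.V ≃ N.pathTree.V :=
  hσ.bijOn.equiv _

@[simp]
theorem portraitEquiv_coe (v : M.pathTree.V) :
    (portraitEquiv hσ v).1 = portraitExtend σ [] v.1 :=
  rfl

theorem portraitEquiv_root : portraitEquiv hσ M.pathTree.root = N.pathTree.root :=
  Subtype.ext rfl

theorem portraitEquiv_adj_iff (v w : M.pathTree.V) :
    M.pathTree.Adj v w ↔ N.pathTree.Adj (portraitEquiv hσ v) (portraitEquiv hσ w) := by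
  simp only [pathTree_adj_iff, portraitEquiv_coe]
  constructor
  · rintro ⟨a, ha⟩
    exact ⟨σ v.1 a, by rw [ha, portraitExtend_append_singleton, List.nil_append]⟩
  · rintro ⟨b, hb⟩
    obtain ⟨w, hw⟩ := w
    obtain rfl | ⟨u, a, rfl⟩ := List.eq_nil_or_concat' w
    · simpa [length_portraitExtend] using congrArg List.length hb
    rw [portraitExtend_append_singleton, List.nil_append] at hb
    have hu := hσ.bijOn.injOn (M.isSome_of_append hw) v.2 (List.append_inj' hb rfl).1
    exact ⟨a, congrArg (· ++ [a]) hu⟩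

theorem IsIsoPortrait.pathTree_iso : M.pathTree.Iso N.pathTree :=
  RGraph.iso_of_equiv pathTree_edge_injective pathTree_edge_injective (portraitEquiv hσ)
    (portraitEquiv_root hσ) (portraitEquiv_adj_iff hσ)

end Portrait

/-- Bisimulations up to relabelling: related states have their transitions matched by a
permutation of the letters, which may depend on the pair. -/
def IsBisim (M N : PDFA A) (R : M.Q → N.Q → Prop) : Prop :=
  ∀ p p', R p p' → ∃ e : Equiv.Perm A, ∀ a, Option.Rel R (M.δ p a) (N.δ p' (e a))

def Bisimilar (M : PDFA A) (p q : M.Q) : Prop := ∃ R, IsBisim M M R ∧ R p q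

section Bisim

variable {K : PDFA A} {R : M.Q → N.Q → Prop} {S : N.Q → K.Q → Prop}

theorem isBisim_eq : IsBisim M M Eq := by
  rintro p _ rfl
  refine ⟨1, fun a => ?_⟩
  rw [Equiv.Perm.one_apply]
  cases M.δ p a
  exacts [.none, .some rfl]

theorem IsBisim.flip (hR : IsBisim M N R) : IsBisim N M (flip R) := by
  intro p' p h
  obtain ⟨e, he⟩ := hR p p' h
  exact ⟨e.symm, fun b => by simpa using (he (e.symm b)).swap⟩

theorem IsBisim.comp (hR : IsBisim M N R) (hS : IsBisim N K S) :
    IsBisim M K (Relation.Comp R S) := by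
  rintro p p'' ⟨p', hR', hS'⟩
  obtain ⟨e₁, he₁⟩ := hR p p' hR'
  obtain ⟨e₂, he₂⟩ := hS p' p'' hS'
  exact ⟨e₁.trans e₂, fun a => (he₁ a).comp (he₂ (e₁ a))⟩

theorem Bisimilar.refl (p : M.Q) : M.Bisimilar p p := ⟨Eq, isBisim_eq, rfl⟩

theorem Bisimilar.symm {p q : M.Q} (h : M.Bisimilar p q) : M.Bisimilar q p :=
  let ⟨R, hR, hpq⟩ := h
  ⟨flip R, hR.flip, hpq⟩

theorem Bisimilar.trans {p q r : M.Q} (h₁ : M.Bisimilar p q) (h₂ : M.Bisimilar q r) :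
    M.Bisimilar p r :=
  let ⟨R, hR, hpq⟩ := h₁
  let ⟨S, hS, hqr⟩ := h₂
  ⟨Relation.Comp R S, hR.comp hS, q, hpq, hqr⟩

variable (E : M.Q × N.Q → Equiv.Perm A)

/-- The states reached by `w` in `M` and by its image under `bisimPortrait E` in `N`; the
`getD` defaults are junk, used only off the language. -/
def pairRun (w : List A) : M.Q × N.Q :=
  w.foldl (fun x a => ((M.δ x.1 a).getD x.1, (N.δ x.2 (E x a)).getD x.2)) (M.init, N.init)

def bisimPortrait (w : List A) : A → A := E (pairRun E w)

variable {E} (hE : ∀ x : M.Q × N.Q, R x.1 x.2 → ∀ a, Option.Rel R (M.δ x.1 a) (N.δ x.2 (E x a)))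
  (hinit : R M.init N.init)
include hE hinit

theorem pairRun_spec {w : List A} (hw : w ∈ M.Lang) :
    M.run M.init w = some (pairRun E w).1 ∧
      N.run N.init (portraitExtend (bisimPortrait E) [] w) = some (pairRun E w).2 ∧
      R (pairRun E w).1 (pairRun E w).2 := by
  induction w using List.reverseRecOn with
  | nil => exact ⟨rfl, rfl, hinit⟩
  | append_singleton w a ih =>
    obtain ⟨hMw, hNw, hR⟩ := ih (M.isSome_of_append hw)
    have hstep : pairRun E (w ++ [a]) =
        ((M.δ (pairRun E w).1 a).getD (pairRun E w).1,
          (N.δ (pairRun E w).2 (E (pairRun E w) a)).getD (pairRun E w).2) := by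
      simp [pairRun]
    change (M.run M.init (w ++ [a])).isSome at hw
    rw [portraitExtend_append_singleton, List.nil_append, run_init_append_singleton hNw,
      run_init_append_singleton hMw, hstep, bisimPortrait]
    rw [run_init_append_singleton hMw] at hw
    have hrel := hE _ hR a
    generalize M.δ (pairRun E w).1 a = o at hw hrel
    generalize N.δ (pairRun E w).2 (E (pairRun E w) a) = o' at hrel
    cases hrel with
    | some h => exact ⟨rfl, rfl, h⟩
    | none => simp at hw

theorem isIsoPortrait_bisimPortrait : IsIsoPortrait M N (bisimPortrait E) := by
  intro w hw
  obtain ⟨hMw, hNw, hR⟩ := pairRun_spec hE hinit hw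
  rw [childLetters_eq_enabled hMw, childLetters_eq_enabled hNw]
  exact (E _).bijOn fun a => by simp [enabled, (hE _ hR a).isSome_eq]

end Bisim

theorem IsBisim.pathTree_iso {R : M.Q → N.Q → Prop} (hR : IsBisim M N R)
    (hinit : R M.init N.init) : M.pathTree.Iso N.pathTree := by
  have hE (x : M.Q × N.Q) :
      ∃ e : Equiv.Perm A, R x.1 x.2 → ∀ a, Option.Rel R (M.δ x.1 a) (N.δ x.2 (e a)) := by
    by_cases h : R x.1 x.2
    · obtain ⟨e, he⟩ := hR _ _ h
      exact ⟨e, fun _ => he⟩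
    · exact ⟨1, fun h' => absurd h' h⟩
  choose E hE using hE
  exact (isIsoPortrait_bisimPortrait hE hinit).pathTree_iso

section Merge

variable {p r : M.Q} (hpr : p ≠ r) (hinit : M.init ≠ r)

open Classical in
noncomputable def redirect (q : M.Q) : {q : M.Q // q ≠ r} :=
  if h : q = r then ⟨p, hpr⟩ else ⟨q, h⟩

noncomputable def merge : PDFA A where
  Q := {q : M.Q // q ≠ r}
  finQ := have := M.finQ; Subtype.finite
  neQ := ⟨⟨p, hpr⟩⟩
  δ q a := (M.δ q.1 a).map (redirect hpr)
  init := ⟨M.init, hinit⟩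

theorem card_merge_lt : Nat.card (merge hpr hinit).Q < Nat.card M.Q :=
  have := M.finQ
  Finite.card_subtype_lt (x := r) (not_not.mpr rfl)

theorem isBisim_merge (hrp : M.Bisimilar r p) :
    IsBisim M (merge hpr hinit) fun x y => M.Bisimilar x y.1 := by
  rintro x y ⟨S, hS, hxy⟩
  obtain ⟨e, he⟩ := hS x y.1 hxy
  refine ⟨e, fun a => ?_⟩
  change Option.Rel _ (M.δ x a) ((M.δ y.1 (e a)).map (redirect hpr))
  have hrel := he a
  generalize M.δ x a = o at hrel ⊢
  generalize M.δ y.1 (e a) = o' at hrel ⊢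
  cases hrel with
  | none => exact .none
  | @some u u' h =>
    refine .some ?_
    have hu : M.Bisimilar u u' := ⟨S, hS, h⟩
    unfold redirect
    split_ifs with hu'
    · exact (hu' ▸ hu).trans hrp
    · exact hu

end Merge

theorem GeomMinimal.eq_of_bisimilar (hfin : Finite A) (hne : Nonempty A) (hM : M.GeomMinimal)
    {p q : M.Q} (h : M.Bisimilar p q) : p = q := by
  have merge_contra {p r : M.Q} (hrp : M.Bisimilar r p) (hpr : p ≠ r) (hinit : M.init ≠ r) :
      False :=
    (hM A hfin hne _ ((isBisim_merge hpr hinit hrp).pathTree_iso (Bisimilar.refl _))).not_gt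
      (card_merge_lt hpr hinit)
  by_contra hpq
  by_cases hq : M.init = q
  · exact merge_contra h (Ne.symm hpq) (hq ▸ Ne.symm hpq)
  · exact merge_contra h.symm hpq hq

def IsPortrait (g : Equiv.Perm M.pathTree.V) (σ : List A → A → A) : Prop :=
  ∀ (w v : M.pathTree.V) (a : A), w.1 = v.1 ++ [a] → (g w).1 = (g v).1 ++ [σ v.1 a]

def Admissible (M : PDFA A) (σ : List A → A → A) : Prop :=
  ∀ v : M.pathTree.V,
    Set.BijOn (σ v.1) (M.enabled (M.qstate v.1 v.2)) (M.enabled (M.qstate v.1 v.2)) ∧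
      ∀ a : A, v.1 ++ [a] ∈ M.Lang →
        M.δ (M.qstate v.1 v.2) (σ v.1 a) = M.δ (M.qstate v.1 v.2) a

theorem Admissible.run_portraitExtend {σ : List A → A → A} (h : M.Admissible σ) {w : List A}
    (hw : w ∈ M.Lang) : M.run M.init (portraitExtend σ [] w) = M.run M.init w := by
  induction w using List.reverseRecOn with
  | nil => rfl
  | append_singleton w a ih =>
    have hw' := M.isSome_of_append hw
    rw [portraitExtend_append_singleton, List.nil_append,
      run_init_append_singleton ((ih hw').trans (run_eq_some_qstate hw')),
      run_init_append_singleton (run_eq_some_qstate hw')]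
    exact (h ⟨w, hw'⟩).2 a hw

theorem Admissible.isIsoPortrait {σ : List A → A → A} (h : M.Admissible σ) :
    IsIsoPortrait M M σ := by
  intro w hw
  rw [childLetters_eq_enabled ((h.run_portraitExtend hw).trans (run_eq_some_qstate hw)),
    childLetters_eq_enabled (run_eq_some_qstate hw)]
  exact (h ⟨w, hw⟩).1

theorem Admissible.exists_isPortrait {σ : List A → A → A} (h : M.Admissible σ) :
    ∃ g ∈ M.pathTree.autGroup, IsPortrait g σ := by
  have hiso := h.isIsoPortrait
  refine ⟨portraitEquiv hiso, ⟨portraitEquiv_root hiso, portraitEquiv_adj_iff hiso⟩, ?_⟩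
  intro w v a hw
  rw [portraitEquiv_coe, portraitEquiv_coe, hw, portraitExtend_append_singleton, List.nil_append]

section Automorphism

variable {g : Equiv.Perm M.pathTree.V} (hg : g ∈ M.pathTree.autGroup)
include hg

theorem exists_isPortrait : ∃ σ, IsPortrait g σ := by
  have hσ (v : List A) (a : A) : ∃ b, ∀ (hv : v ∈ M.Lang) (hva : v ++ [a] ∈ M.Lang),
      (g ⟨v ++ [a], hva⟩).1 = (g ⟨v, hv⟩).1 ++ [b] := by
    by_cases hva : v ++ [a] ∈ M.Lang
    · obtain ⟨b, hb⟩ := pathTree_adj_iff.mp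
        ((hg.2 ⟨v, M.isSome_of_append hva⟩ ⟨v ++ [a], hva⟩).mp (pathTree_adj_iff.mpr ⟨a, rfl⟩))
      exact ⟨b, fun _ _ => hb⟩
    · exact ⟨a, fun _ h => absurd h hva⟩
  choose σ hσ using hσ
  refine ⟨σ, ?_⟩
  rintro ⟨w, hw⟩ ⟨v, hv⟩ a rfl
  exact hσ v a hv hw

theorem IsPortrait.bijOn {σ : List A → A → A} (hσ : IsPortrait g σ) (v : M.pathTree.V) :
    Set.BijOn (σ v.1) (M.childLetters v.1) (M.childLetters (g v).1) := by
  refine ⟨fun a ha => ?_, fun a ha a' ha' h => ?_, fun b hb => ?_⟩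
  · change (M.run M.init _).isSome
    rw [← hσ ⟨v.1 ++ [a], ha⟩ v a rfl]
    exact (g _).2
  · have h' := g.injective (Subtype.ext ((hσ ⟨v.1 ++ [a], ha⟩ v a rfl).trans
      (h ▸ (hσ ⟨v.1 ++ [a'], ha'⟩ v a' rfl).symm)))
    simpa using congrArg Subtype.val h'
  · set w' : M.pathTree.V := ⟨(g v).1 ++ [b], hb⟩
    have hadj : M.pathTree.Adj (g v) (g (g.symm w')) := by
      rw [g.apply_symm_apply]
      exact pathTree_adj_iff.mpr ⟨b, rfl⟩
    obtain ⟨a, ha⟩ := pathTree_adj_iff.mp ((hg.2 _ _).mpr hadj)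
    refine ⟨a, by change v.1 ++ [a] ∈ M.Lang; rw [← ha]; exact (g.symm w').2, ?_⟩
    have h := hσ _ v a ha
    rw [g.apply_symm_apply] at h
    simpa [w'] using h.symm

theorem bisimilar_qstate_aut [Finite A] (v : M.pathTree.V) :
    M.Bisimilar (M.qstate v.1 v.2) (M.qstate (g v).1 (g v).2) := by
  classical
  obtain ⟨σ, hσ⟩ := exists_isPortrait hg
  refine ⟨fun p p' => ∃ v : M.pathTree.V,
    M.qstate v.1 v.2 = p ∧ M.qstate (g v).1 (g v).2 = p', ?_, v, rfl, rfl⟩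
  rintro _ _ ⟨v, rfl, rfl⟩
  let e : Equiv.Perm A := ((hσ.bijOn hg v).equiv _).extendSubtype
  refine ⟨e, fun a => ?_⟩
  by_cases ha : a ∈ M.childLetters v.1
  · let w : M.pathTree.V := ⟨v.1 ++ [a], ha⟩
    have hvw : M.δ (M.qstate v.1 v.2) a = some (M.qstate w.1 w.2) :=
      (run_init_append_singleton (run_eq_some_qstate v.2) a).symm.trans
        (run_eq_some_qstate w.2)
    have hgvw : M.δ (M.qstate (g v).1 (g v).2) (e a) = some (M.qstate (g w).1 (g w).2) := by
      have he : e a = σ v.1 a := by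
        rw [Equiv.extendSubtype_apply_of_mem _ _ ha]
        rfl
      rw [he, ← run_init_append_singleton (run_eq_some_qstate (g v).2), ← hσ w v a rfl]
      exact run_eq_some_qstate (g w).2
    rw [hvw, hgvw]
    exact .some ⟨w, rfl, rfl⟩
  · have hb : e a ∉ M.childLetters (g v).1 := Equiv.extendSubtype_not_mem _ _ ha
    rw [childLetters_eq_enabled (run_eq_some_qstate v.2)] at ha
    rw [childLetters_eq_enabled (run_eq_some_qstate (g v).2)] at hb
    rw [Option.not_isSome_iff_eq_none.mp ha, Option.not_isSome_iff_eq_none.mp hb]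
    exact .none

end Automorphism

theorem GeomMinimal.run_aut_eq (hfin : Finite A) (hne : Nonempty A) (hM : M.GeomMinimal)
    {g : Equiv.Perm M.pathTree.V} (hg : g ∈ M.pathTree.autGroup) (v : M.pathTree.V) :
    M.run M.init (g v).1 = M.run M.init v.1 := by
  rw [run_eq_some_qstate (g v).2, run_eq_some_qstate v.2,
    hM.eq_of_bisimilar hfin hne (bisimilar_qstate_aut hg v)]

theorem GeomMinimal.admissible (hfin : Finite A) (hne : Nonempty A) (hM : M.GeomMinimal)
    {g : Equiv.Perm M.pathTree.V} (hg : g ∈ M.pathTree.autGroup) {σ : List A → A → A}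
    (hσ : IsPortrait g σ) : M.Admissible σ := by
  intro v
  have hv := run_eq_some_qstate v.2
  have hgv := (hM.run_aut_eq hfin hne hg v).trans hv
  refine ⟨?_, fun a ha => ?_⟩
  · have h := hσ.bijOn hg v
    rwa [childLetters_eq_enabled hv, childLetters_eq_enabled hgv] at h
  · calc M.δ (M.qstate v.1 v.2) (σ v.1 a)
        = M.run M.init ((g v).1 ++ [σ v.1 a]) := (run_init_append_singleton hgv _).symm
      _ = M.run M.init (g ⟨v.1 ++ [a], ha⟩).1 := by rw [hσ ⟨v.1 ++ [a], ha⟩ v a rfl]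
      _ = M.run M.init (v.1 ++ [a]) := hM.run_aut_eq hfin hne hg _
      _ = M.δ (M.qstate v.1 v.2) a := run_init_append_singleton hv a

end PDFA

theorem stmt15_general {A : Type} (hfin : Finite A) (hne : Nonempty A)
    (M : PDFA A) (hM : M.GeomMinimal)
    (σ : List A → A → A) :
    (∃ g ∈ M.pathTree.autGroup,
      ∀ (w v : M.pathTree.V) (a : A), w.1 = v.1 ++ [a] →
        (g w).1 = (g v).1 ++ [σ v.1 a]) ↔
    (∀ v : M.pathTree.V,
      Set.BijOn (σ v.1) {a | (M.δ (M.qstate v.1 v.2) a).isSome}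
        {a | (M.δ (M.qstate v.1 v.2) a).isSome} ∧
      ∀ a : A, v.1 ++ [a] ∈ M.Lang →
        M.δ (M.qstate v.1 v.2) (σ v.1 a) = M.δ (M.qstate v.1 v.2) a) := by
  constructor
  · rintro ⟨g, hg, hσ⟩
    exact hM.admissible hfin hne hg hσ
  · exact PDFA.Admissible.exists_isPortrait

/-- Portraits of automorphisms for geometrically minimal DFAs.
Let `M` be a geometrically minimal DFA with language `ℒ` and path language tree `T`.
A portrait `σ = (ᵛσ)` (a family of injections `ᵛσ : Σ(v) → Σ`) defines an automorphism
of `T` if and only if it is admissible: for every `v ∈ ℒ`, `ᵛσ` is a permutation of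
`Σ(q(v))` satisfying `δ(q(v), ᵛσ(α)) = δ(q(v), α)` for all `α ∈ Σ(v)`. -/
theorem stmt15 {A : Type} (hfin : Finite A) (hne : Nonempty A)
    (M : PDFA A) (hM : M.GeomMinimal)
    (σ : List A → A → A)
    (hσ : ∀ v : M.pathTree.V, Set.InjOn (σ v.1) {a | v.1 ++ [a] ∈ M.Lang}) :
    (∃ g ∈ M.pathTree.autGroup,
      ∀ (w v : M.pathTree.V) (a : A), w.1 = v.1 ++ [a] →
        (g w).1 = (g v).1 ++ [σ v.1 a]) ↔
    (∀ v : M.pathTree.V,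
      Set.BijOn (σ v.1) {a | (M.δ (M.qstate v.1 v.2) a).isSome}
        {a | (M.δ (M.qstate v.1 v.2) a).isSome} ∧
      ∀ a : A, v.1 ++ [a] ∈ M.Lang →
        M.δ (M.qstate v.1 v.2) (σ v.1 a) = M.δ (M.qstate v.1 v.2) a) :=
  stmt15_general hfin hne M hM σ
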